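/- Unrestricted commutation of the conditional with negation holds in both DF/TT and CC/TT: for all formulae A and B, every DF-evaluation v satisfies v(¬(A→B)) = v(A→¬B), and every CC-evaluation v satisfies v(¬(A→B)) = v(A→¬B); consequently ¬(A→B) and A→¬B are TT-interderivable in both logics (¬(A→B) ⊨_X/TT A→¬B and A→¬B ⊨_X/TT ¬(A→B), for X = DF and X = CC). -/
import Mathlib


inductive Formula : Type
  | var : Nat → Formula
  | neg : Formula → Formula
  | conj : Formula → Formula → Formula
  | disj : Formula → Formula → Formula
  | impl : Formula → Formula → Formula
deriving DecidableEq

inductive TV : Type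
  | zero
  | half
  | one
deriving DecidableEq

/-- Strong Kleene negation: 0↦1, ½↦½, 1↦0. -/
def tneg : TV → TV
  | .zero => .one
  | .half => .half
  | .one => .zero

/-- min on {0,½,1}. -/
def tmin : TV → TV → TV
  | .zero, _ => .zero
  | .half, .zero => .zero
  | .half, .half => .half
  | .half, .one => .half
  | .one, b => b

/-- max on {0,½,1}. -/
def tmax : TV → TV → TV
  | .one, _ => .one
  | .half, .zero => .half
  | .half, .half => .half
  | .half, .one => .one
  | .zero, b => b

/-- Designated values: ½ and 1. -/
def designated (x : TV) : Prop := x = TV.half ∨ x = TV.one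

/-- The de Finetti conditional table: f_DF(x,y) = y if x = 1, and ½ if x ∈ {0,½}. -/
def fDF : TV → TV → TV
  | .one, b => b
  | .zero, _ => .half
  | .half, _ => .half

/-- A DF-evaluation. -/
def IsDFEval (v : Formula → TV) : Prop :=
  (∀ A, v (.neg A) = tneg (v A)) ∧
  (∀ A B, v (.conj A B) = tmin (v A) (v B)) ∧
  (∀ A B, v (.disj A B) = tmax (v A) (v B)) ∧
  (∀ A B, v (.impl A B) = fDF (v A) (v B))

/-- TT-validity: Γ ⊨_DF/TT A. -/
def DFConsequence (Γ : Set Formula) (A : Formula) : Prop :=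
  ∀ v : Formula → TV, IsDFEval v → (∀ B ∈ Γ, designated (v B)) → designated (v A)

/-- The Cooper–Cantwell conditional table: f_CC(x,y) = y if x ∈ {½,1}, and ½ if x = 0. -/
def fCC : TV → TV → TV
  | .zero, _ => .half
  | .half, b => b
  | .one, b => b

/-- A CC-evaluation. -/
def IsCCEval (v : Formula → TV) : Prop :=
  (∀ A, v (.neg A) = tneg (v A)) ∧
  (∀ A B, v (.conj A B) = tmin (v A) (v B)) ∧
  (∀ A B, v (.disj A B) = tmax (v A) (v B)) ∧
  (∀ A B, v (.impl A B) = fCC (v A) (v B))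

/-- TT-validity: Γ ⊨_CC/TT A. -/
def CCConsequence (Γ : Set Formula) (A : Formula) : Prop :=
  ∀ v : Formula → TV, IsCCEval v → (∀ B ∈ Γ, designated (v B)) → designated (v A)

/-- Unrestricted commutation of the conditional with negation in DF/TT and CC/TT:
every DF-evaluation and every CC-evaluation v satisfies v(¬(A→B)) = v(A→¬B);
consequently ¬(A→B) and A→¬B are TT-interderivable in both logics. -/
theorem commutation_neg_cond :
    (∀ v : Formula → TV, IsDFEval v →
      ∀ A B, v (.neg (.impl A B)) = v (.impl A (.neg B))) ∧
    (∀ v : Formula → TV, IsCCEval v →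
      ∀ A B, v (.neg (.impl A B)) = v (.impl A (.neg B))) ∧
    (∀ A B, DFConsequence {Formula.neg (.impl A B)} (.impl A (.neg B))) ∧
    (∀ A B, DFConsequence {Formula.impl A (.neg B)} (.neg (.impl A B))) ∧
    (∀ A B, CCConsequence {Formula.neg (.impl A B)} (.impl A (.neg B))) ∧
    (∀ A B, CCConsequence {Formula.impl A (.neg B)} (.neg (.impl A B))) := by

  have hdf : ∀ v : Formula → TV, IsDFEval v →
      ∀ A B, v (.neg (.impl A B)) = v (.impl A (.neg B)) := by
    rintro v ⟨hn, _, _, hi⟩ A B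
    rw [hn, hi, hi, hn]
    cases v A <;> cases v B <;> rfl
  have hcc : ∀ v : Formula → TV, IsCCEval v →
      ∀ A B, v (.neg (.impl A B)) = v (.impl A (.neg B)) := by
    rintro v ⟨hn, _, _, hi⟩ A B
    rw [hn, hi, hi, hn]
    cases v A <;> cases v B <;> rfl
  refine ⟨hdf, hcc, ?_, ?_, ?_, ?_⟩
  · intro A B v hv hΓ
    rw [← hdf v hv A B]; exact hΓ _ rfl
  · intro A B v hv hΓ
    rw [hdf v hv A B]; exact hΓ _ rfl
  · intro A B v hv hΓ
    rw [← hcc v hv A B]; exact hΓ _ rfl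
  · intro A B v hv hΓ
    rw [hcc v hv A B]; exact hΓ _ rfl
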